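/- Let δ ∈ (0, 1/2] and let B be a symmetric real d×d matrix. Then B : (I − g_δ′(B)) ≥ (1/2)|B| − d, where the colon denotes the Frobenius inner product and |B| the Frobenius norm. -/

import Mathlib

open Matrix

/-- The Frobenius inner product of two real matrices. -/
noncomputable def frobInner {d : ℕ} (A C : Matrix (Fin d) (Fin d) ℝ) : ℝ :=
  ∑ i, ∑ j, A i j * C i j

/-- The Frobenius norm of a real matrix. -/
noncomputable def frobNorm {d : ℕ} (A : Matrix (Fin d) (Fin d) ℝ) : ℝ :=
  Real.sqrt (∑ i, ∑ j, (A i j) ^ 2)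

/-- The matrix obtained by applying a scalar function `F : ℝ → ℝ` to the spectrum of a
symmetric (Hermitian) real matrix `B`. -/
noncomputable def specApply {d : ℕ} (F : ℝ → ℝ) {B : Matrix (Fin d) (Fin d) ℝ}
    (hB : B.IsHermitian) : Matrix (Fin d) (Fin d) ℝ :=
  (hB.eigenvectorUnitary : Matrix (Fin d) (Fin d) ℝ) *
    Matrix.diagonal (fun i => F (hB.eigenvalues i)) *
    star (hB.eigenvectorUnitary : Matrix (Fin d) (Fin d) ℝ)

/-! In an orthonormal eigenbasis of `B` both sides become sums over the eigenvalues `λᵢ`: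
`B : (I - g_δ'(B)) = ∑ λᵢ (1 - 1 / max λᵢ δ)` and `|B| = (∑ λᵢ²)^{1/2} ≤ ∑ |λᵢ|`.
The claim thus reduces to the scalar inequality `|x| / 2 - 1 ≤ x (1 - 1 / max x δ)`, which for
`δ ≤ 1/2` is checked separately on `x ≥ δ`, `0 < x < δ` and `x ≤ 0`. -/

lemma frobInner_eq_trace_transpose_mul {d : ℕ} (A C : Matrix (Fin d) (Fin d) ℝ) :
    frobInner A C = (Aᵀ * C).trace := by
  simp only [frobInner, trace, diag, mul_apply, transpose_apply]
  exact Finset.sum_comm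

lemma frobNorm_eq_sqrt_frobInner_self {d : ℕ} (A : Matrix (Fin d) (Fin d) ℝ) :
    frobNorm A = √(frobInner A A) := by
  simp only [frobNorm, frobInner, sq]

lemma Real.sqrt_sum_sq_le_sum_abs {ι : Type*} (s : Finset ι) (f : ι → ℝ) :
    √(∑ i ∈ s, f i ^ 2) ≤ ∑ i ∈ s, |f i| := by
  rw [Real.sqrt_le_iff]
  refine ⟨Finset.sum_nonneg fun i _ => abs_nonneg (f i), ?_⟩
  simpa only [sq_abs] using Finset.sum_sq_le_sq_sum_of_nonneg fun i _ => abs_nonneg (f i)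

section specApply

variable {d : ℕ} {B : Matrix (Fin d) (Fin d) ℝ} (hB : B.IsHermitian)

lemma specApply_id : specApply id hB = B :=
  hB.spectral_theorem.symm

lemma specApply_one : specApply (fun _ => 1) hB = 1 := by
  rw [specApply, diagonal_one, mul_one, ← mem_unitaryGroup_iff]
  exact hB.eigenvectorUnitary.2

lemma specApply_sub (F G : ℝ → ℝ) :
    specApply F hB - specApply G hB = specApply (fun s => F s - G s) hB := by
  rw [specApply, specApply, specApply, ← sub_mul, ← mul_sub, diagonal_sub]

lemma specApply_mul (F G : ℝ → ℝ) :
    specApply F hB * specApply G hB = specApply (fun s => F s * G s) hB := by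
  set U : Matrix (Fin d) (Fin d) ℝ := ↑hB.eigenvectorUnitary
  have hU : star U * U = 1 := mem_unitaryGroup_iff'.mp hB.eigenvectorUnitary.2
  calc specApply F hB * specApply G hB
      = U * diagonal (fun i => F (hB.eigenvalues i)) * (star U * U) *
          diagonal (fun i => G (hB.eigenvalues i)) * star U := by
        simp only [specApply, U, Matrix.mul_assoc]
    _ = specApply (fun s => F s * G s) hB := by
        rw [hU, Matrix.mul_one, Matrix.mul_assoc U, diagonal_mul_diagonal]
        rfl

lemma trace_specApply (F : ℝ → ℝ) :
    (specApply F hB).trace = ∑ i, F (hB.eigenvalues i) := by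
  rw [specApply, trace_mul_cycle, mem_unitaryGroup_iff'.mp hB.eigenvectorUnitary.2, one_mul,
    trace_diagonal]

lemma frobInner_specApply (F : ℝ → ℝ) :
    frobInner B (specApply F hB) = ∑ i, hB.eigenvalues i * F (hB.eigenvalues i) := by
  calc frobInner B (specApply F hB) = (specApply id hB * specApply F hB).trace := by
        rw [frobInner_eq_trace_transpose_mul, ← conjTranspose_eq_transpose_of_trivial, hB.eq,
          specApply_id]
    _ = _ := by rw [specApply_mul, trace_specApply]; rfl

lemma frobNorm_le_sum_abs_eigenvalues : frobNorm B ≤ ∑ i, |hB.eigenvalues i| := by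
  have hBB : frobInner B B = ∑ i, hB.eigenvalues i ^ 2 := by
    simpa only [specApply_id, id, ← sq] using frobInner_specApply hB id
  rw [frobNorm_eq_sqrt_frobInner_self, hBB]
  exact Real.sqrt_sum_sq_le_sum_abs _ _

end specApply

lemma half_abs_sub_one_le_mul_one_sub_inv_max {δ : ℝ} (hδ₀ : 0 < δ) (hδ : δ ≤ 1 / 2) (x : ℝ) :
    |x| / 2 - 1 ≤ x * (1 - 1 / max x δ) := by
  rcases le_or_gt δ x with hδx | hxδ
  · have hx : 0 < x := hδ₀.trans_le hδx
    rw [max_eq_left hδx, abs_of_pos hx, mul_sub, mul_one_div_cancel hx.ne']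
    linarith
  · rw [max_eq_right hxδ.le, mul_sub, mul_one, mul_one_div]
    rcases le_or_gt x 0 with hx | hx
    · have : 2 * x ≥ x / δ := by
        rw [ge_iff_le, div_le_iff₀ hδ₀]; nlinarith
      rw [abs_of_nonpos hx]; linarith
    · have : x / δ < 1 := (div_lt_one hδ₀).mpr hxδ
      rw [abs_of_pos hx]; linarith

theorem frobInner_ge_half_frobNorm_sub_dim_general {d : ℕ} (δ : ℝ)
    (hδ : δ ∈ Set.Ioc (0:ℝ) (1/2)) (B : Matrix (Fin d) (Fin d) ℝ) (hB : B.IsHermitian) :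
    (1 / 2) * frobNorm B - (d : ℝ) ≤
      frobInner B ((1 : Matrix (Fin d) (Fin d) ℝ) - specApply (fun s => 1 / max s δ) hB) := by
  calc (1 / 2) * frobNorm B - (d : ℝ) ≤ (1 / 2) * ∑ i, |hB.eigenvalues i| - d := by
        gcongr; exact frobNorm_le_sum_abs_eigenvalues hB
    _ = ∑ i, (|hB.eigenvalues i| / 2 - 1) := by
        simp [Finset.sum_sub_distrib, div_eq_inv_mul, Finset.mul_sum]
    _ ≤ ∑ i, hB.eigenvalues i * (1 - 1 / max (hB.eigenvalues i) δ) :=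
        Finset.sum_le_sum fun i _ =>
          half_abs_sub_one_le_mul_one_sub_inv_max hδ.1 hδ.2 (hB.eigenvalues i)
    _ = _ := by rw [← specApply_one hB, specApply_sub, frobInner_specApply]

/-- For `δ ∈ (0, 1/2]` and a symmetric real `d × d` matrix `B`,
`B : (I - g_δ'(B)) ≥ (1/2) |B| - d`, where `g_δ'(s) = 1 / max s δ`, `:` is the Frobenius
inner product and `|B|` the Frobenius norm. -/
theorem frobInner_ge_half_frobNorm_sub_dim {d : ℕ} (hd : 0 < d) (δ : ℝ)
    (hδ : δ ∈ Set.Ioc (0:ℝ) (1/2)) (B : Matrix (Fin d) (Fin d) ℝ) (hB : B.IsHermitian) :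
    (1 / 2) * frobNorm B - (d : ℝ) ≤
      frobInner B ((1 : Matrix (Fin d) (Fin d) ℝ) - specApply (fun s => 1 / max s δ) hB) :=
  frobInner_ge_half_frobNorm_sub_dim_general δ hδ B hB
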